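/- In the setting of the previous statement, if in addition F : D → D' is fully faithful, then the induced functor F̄ : D/N → D'/N' is fully faithful. -/

import Mathlib

/-!
The adjunction `F ⊣ G` descends to an adjunction `F̄ ⊣ Ḡ` between the Verdier quotients,
whose unit at `Q X` is the image of the unit of `F ⊣ G` at `X`. Since `F` is fully faithful
that unit is an isomorphism, hence so is the unit of `F̄ ⊣ Ḡ` (every object of `D/N` is of the
form `Q X` up to isomorphism), and a left adjoint with invertible unit is fully faithful.
-/

open CategoryTheory Limits Pretriangulated Triangulated

namespace CategoryTheory

lemma ObjectProperty.trW.map {C C' : Type*} [Category C] [Category C']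
    [HasZeroObject C] [HasZeroObject C'] [Preadditive C] [Preadditive C']
    [HasShift C ℤ] [HasShift C' ℤ]
    [∀ n : ℤ, (shiftFunctor C n).Additive] [∀ n : ℤ, (shiftFunctor C' n).Additive]
    [Pretriangulated C] [Pretriangulated C']
    {P : ObjectProperty C} {P' : ObjectProperty C'}
    (G : C ⥤ C') [G.CommShift ℤ] [G.IsTriangulated] (hG : ∀ X, P X → P' (G.obj X))
    {X Y : C} {f : X ⟶ Y} (hf : P.trW f) : P'.trW (G.map f) := by
  obtain ⟨Z, g, h, hT, hZ⟩ := hf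
  exact ObjectProperty.trW.mk P' (G.map_distinguished _ hT) (hG _ hZ)

namespace Adjunction

variable {C₁ C₂ D₁ D₂ : Type*} [Category C₁] [Category C₂] [Category D₁] [Category D₂]
  {G : C₁ ⥤ C₂} {F : C₂ ⥤ C₁} (adj : G ⊣ F)
  (L₁ : C₁ ⥤ D₁) (W₁ : MorphismProperty C₁) [L₁.IsLocalization W₁]
  (L₂ : C₂ ⥤ D₂) (W₂ : MorphismProperty C₂) [L₂.IsLocalization W₂]
  (G' : D₁ ⥤ D₂) (F' : D₂ ⥤ D₁) [CatCommSq G L₁ L₂ G'] [CatCommSq F L₂ L₁ F']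

lemma isIso_localization_unit [IsIso adj.unit] :
    IsIso (adj.localization L₁ W₁ L₂ W₂ G' F').unit := by
  have := Localization.essSurj L₁ W₁
  have (Y : D₁) : IsIso ((adj.localization L₁ W₁ L₂ W₂ G' F').unit.app Y) := by
    rw [← NatTrans.isIso_app_iff_of_iso _ (L₁.objObjPreimageIso Y), localization_unit_app]
    infer_instance
  exact NatIso.isIso_of_isIso_app _

end Adjunction

end CategoryTheory

/-- In the setting of an adjoint pair `F ⊣ G` of exact functors preserving the
subcategories `N`, `N'`, if `F` is moreover fully faithful then any functor
`F̄ : D/N → D'/N'` induced by `F` on the Verdier quotients is fully faithful. -/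
theorem stmt1 {D D' : Type*} [Category D] [Category D']
    [HasZeroObject D] [HasZeroObject D'] [Preadditive D] [Preadditive D']
    [HasShift D ℤ] [HasShift D' ℤ]
    [∀ n : ℤ, (shiftFunctor D n).Additive] [∀ n : ℤ, (shiftFunctor D' n).Additive]
    [Pretriangulated D] [Pretriangulated D'] [IsTriangulated D] [IsTriangulated D']
    (N : ObjectProperty D) [N.IsTriangulated] (N' : ObjectProperty D') [N'.IsTriangulated]
    (F : D ⥤ D') (G : D' ⥤ D) [F.CommShift ℤ] [G.CommShift ℤ]
    [F.IsTriangulated] [G.IsTriangulated] (adj : F ⊣ G)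
    (hF : ∀ X : D, N X → N' (F.obj X))
    (hG : ∀ Y : D', N' Y → N (G.obj Y))
    [F.Full] [F.Faithful]
    (Fbar : N.trW.Localization ⥤ N'.trW.Localization)
    (eF : N.trW.Q ⋙ Fbar ≅ F ⋙ N'.trW.Q) :
    Fbar.Full ∧ Fbar.Faithful := by
  have hGW : N'.trW.IsInvertedBy (G ⋙ N.trW.Q) := fun _ _ _ hf =>
    Localization.inverts N.trW.Q N.trW _ (hf.map G hG)
  let Gbar := Localization.lift (G ⋙ N.trW.Q) hGW N'.trW.Q
  let _ : CatCommSq F N.trW.Q N'.trW.Q Fbar := ⟨eF.symm⟩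
  let _ : CatCommSq G N'.trW.Q N.trW.Q Gbar :=
    ⟨(Localization.fac (G ⋙ N.trW.Q) hGW N'.trW.Q).symm⟩
  let adjbar : Fbar ⊣ Gbar := adj.localization N.trW.Q N.trW N'.trW.Q N'.trW Fbar Gbar
  have : IsIso adjbar.unit := adj.isIso_localization_unit N.trW.Q N.trW N'.trW.Q N'.trW Fbar Gbar
  let hFbar := adjbar.fullyFaithfulLOfIsIsoUnit
  exact ⟨hFbar.full, hFbar.faithful⟩
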